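/- arXiv:2102.12572 — 4 statements merged into one kernel-verified Lean document; each statement's English description precedes it below -/
import Mathlib

section
/- Let T > 0, let y, b : [0,T] → ℝ be differentiable functions and let g : ℝ → ℝ be continuous, and suppose y'(t) = g(y(t)) + b'(t) for every t ∈ [0,T]. Assume there are constants N₀ ≥ 0, N₁ ≥ 0 such that b(t₂) − b(t₁) ≤ N₀ + N₁(t₂ − t₁) for all 0 ≤ t₁ < t₂ ≤ T, and that there is a constant ζ̄ such that g(ζ) ≤ −N₁ for every ζ ≥ ζ̄. Then y(t) ≤ max{y(0), ζ̄} + N₀ for every t ∈ [0,T]. -/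
open Set

/-- Zlotnik's inequality (Lemma 2.3). -/
theorem zlotnik_inequality (T : ℝ) (hT : 0 < T) (y b y' b' g : ℝ → ℝ)
    (hg : Continuous g)
    (hy : ∀ t ∈ Icc (0:ℝ) T, HasDerivAt y (y' t) t)
    (hb : ∀ t ∈ Icc (0:ℝ) T, HasDerivAt b (b' t) t)
    (hode : ∀ t ∈ Icc (0:ℝ) T, y' t = g (y t) + b' t)
    (N₀ N₁ : ℝ) (hN₀ : 0 ≤ N₀) (hN₁ : 0 ≤ N₁)
    (hbineq : ∀ t₁ t₂ : ℝ, 0 ≤ t₁ → t₁ < t₂ → t₂ ≤ T →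
      b t₂ - b t₁ ≤ N₀ + N₁ * (t₂ - t₁))
    (ζ : ℝ) (hζ : ∀ z : ℝ, ζ ≤ z → g z ≤ -N₁) :
    ∀ t ∈ Icc (0:ℝ) T, y t ≤ max (y 0) ζ + N₀ := by
  intro t ht
  obtain ⟨ht0, htT⟩ := ht
  set M := max (y 0) ζ with hMdef
  by_cases hyt : y t ≤ M
  · linarith
  push_neg at hyt
  -- the set of times in [0,t] where y ≤ M
  set S : Set ℝ := {s | s ∈ Icc 0 t ∧ y s ≤ M} with hSdef
  have hsub : Icc (0:ℝ) t ⊆ Icc 0 T := Icc_subset_Icc le_rfl htT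
  have hyc : ContinuousOn y (Icc 0 t) := fun s hs =>
    ((hy s (hsub hs)).continuousAt).continuousWithinAt
  have hSclosed : IsClosed S := by
    have : S = Icc 0 t ∩ y ⁻¹' Iic M := rfl
    rw [this]
    exact hyc.preimage_isClosed_of_isClosed isClosed_Icc isClosed_Iic
  have h0S : (0:ℝ) ∈ S := ⟨⟨le_rfl, ht0⟩, le_max_left _ _⟩
  have hSne : S.Nonempty := ⟨0, h0S⟩
  have hSbdd : BddAbove S := ⟨t, fun s hs => hs.1.2⟩
  set t₁ := sSup S with ht₁def
  have ht₁S : t₁ ∈ S := hSclosed.csSup_mem hSne hSbdd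
  have ht₁0 : 0 ≤ t₁ := ht₁S.1.1
  have ht₁t : t₁ < t := lt_of_le_of_ne ht₁S.1.2 (by
    intro h; exact absurd ht₁S.2 (by rw [h]; linarith))
  -- on (t₁, t], y > M ≥ ζ
  have hgtM : ∀ s ∈ Ioc t₁ t, M < y s := by
    intro s hs
    by_contra hle
    push_neg at hle
    have hsS : s ∈ S := ⟨⟨le_trans ht₁0 hs.1.le, hs.2⟩, hle⟩
    exact absurd (le_csSup hSbdd hsS) (not_le.mpr hs.1)
  -- h = y - b + N₁ * id is antitone on [t₁, t]
  set h : ℝ → ℝ := fun s => y s - b s + N₁ * s with hhdef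
  have hderiv : ∀ s ∈ Icc (0:ℝ) T, HasDerivAt h (y' s - b' s + N₁) s := by
    intro s hs
    have : HasDerivAt (fun u => N₁ * u) N₁ s := by
      simpa using (hasDerivAt_id s).const_mul N₁
    exact ((hy s hs).sub (hb s hs)).add this
  have hIccsub : Icc t₁ t ⊆ Icc 0 T := Icc_subset_Icc ht₁0 htT
  have hanti : AntitoneOn h (Icc t₁ t) := by
    apply antitoneOn_of_deriv_nonpos (convex_Icc _ _)
    · exact fun s hs => (hderiv s (hIccsub hs)).continuousAt.continuousWithinAt
    · intro s hs
      rw [interior_Icc] at hs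
      exact (hderiv s (hIccsub (Ioo_subset_Icc_self hs))).differentiableAt.differentiableWithinAt
    · intro s hs
      rw [interior_Icc] at hs
      have hsT : s ∈ Icc (0:ℝ) T := hIccsub (Ioo_subset_Icc_self hs)
      rw [(hderiv s hsT).deriv, hode s hsT]
      have hys : ζ ≤ y s := le_trans (le_max_right _ _)
        (hgtM s ⟨hs.1, hs.2.le⟩).le
      have := hζ (y s) hys
      linarith
  have hkey : h t ≤ h t₁ :=
    hanti ⟨le_rfl, ht₁t.le⟩ ⟨ht₁t.le, le_rfl⟩ ht₁t.le
  have hb' : b t - b t₁ ≤ N₀ + N₁ * (t - t₁) := hbineq t₁ t ht₁0 ht₁t htT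
  have hyt₁ : y t₁ ≤ M := ht₁S.2
  simp only [hhdef] at hkey
  have : M ≤ max (y 0) ζ := le_of_eq hMdef.symm
  nlinarith
end

section
/- Let Ω ⊆ ℝ³ be a bounded Lebesgue-measurable set of positive measure, let ψ : Ω → ℝ be a bounded measurable function, let a > 0 and γ > 1, and let m ∈ ℝ satisfy m > ∫_Ω ((γ−1)/(aγ) · (ψ(x) − essinf_Ω ψ))^{1/(γ−1)} dx. Then there exists a unique real number λ < essinf_Ω ψ such that ∫_Ω ((γ−1)/(aγ) · (ψ(x) − λ))^{1/(γ−1)} dx = m. -/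
/-!
For `c, p > 0` the mass `Φ(λ) = ∫_Ω (c (ψ - λ))^p` is continuous in `λ` (dominated convergence,
`ψ` being bounded), strictly decreasing on `λ ≤ essinf ψ` (there `ψ - λ ≥ 0` a.e. and `t ↦ (c t)^p`
is strictly increasing on `[0, ∞)`), and tends to `+∞` as `λ → -∞`. Since `Φ(essinf ψ) < m`, the
intermediate value theorem gives a multiplier, and strict monotonicity makes it unique.
-/

open MeasureTheory Filter Set Topology

section

variable {α : Type*} [MeasurableSpace α] {μ : Measure α}

theorem integral_lt_integral_of_ae_lt [NeZero μ] {f g : α → ℝ} (hf : Integrable f μ)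
    (hg : Integrable g μ) (h : ∀ᵐ x ∂μ, f x < g x) : ∫ x, f x ∂μ < ∫ x, g x ∂μ := by
  have hpos : 0 < ∫ x, (g x - f x) ∂μ := by
    rw [integral_pos_iff_support_of_nonneg_ae (h.mono fun x hx => sub_nonneg.2 hx.le) (hg.sub hf)]
    refine pos_iff_ne_zero.2 fun h0 => NeZero.ne μ (ae_eq_bot.1 ?_)
    refine eventually_false_iff_eq_bot.1 ?_
    filter_upwards [h, measure_eq_zero_iff_ae_notMem.1 h0] with x hlt hx
    exact hx (sub_ne_zero.2 hlt.ne')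
  rwa [integral_sub hg hf, sub_pos] at hpos

variable {ψ : α → ℝ} {C : ℝ} {f : ℝ → ℝ}

theorem exists_ae_norm_comp_sub_le (hf : Continuous f) (hC : ∀ᵐ x ∂μ, |ψ x| ≤ C) (R : ℝ) :
    ∃ B, ∀ l, |l| ≤ R → ∀ᵐ x ∂μ, ‖f (ψ x - l)‖ ≤ B := by
  obtain ⟨B, hB⟩ := (isCompact_Icc (a := -(C + R)) (b := C + R)).exists_bound_of_continuousOn
    hf.continuousOn
  refine ⟨B, fun l hl => hC.mono fun x hx => hB _ ?_⟩
  exact abs_le.1 ((abs_sub _ _).trans (add_le_add hx hl))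

variable [IsFiniteMeasure μ]

theorem integrable_comp_sub (hf : Continuous f) (hψ : AEStronglyMeasurable ψ μ)
    (hC : ∀ᵐ x ∂μ, |ψ x| ≤ C) (l : ℝ) : Integrable (fun x => f (ψ x - l)) μ := by
  obtain ⟨B, hB⟩ := exists_ae_norm_comp_sub_le hf hC |l|
  exact .of_bound (hf.comp_aestronglyMeasurable (hψ.sub aestronglyMeasurable_const)) B
    (hB l le_rfl)

theorem continuous_integral_comp_sub (hf : Continuous f) (hψ : AEStronglyMeasurable ψ μ)
    (hC : ∀ᵐ x ∂μ, |ψ x| ≤ C) : Continuous fun l => ∫ x, f (ψ x - l) ∂μ := by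
  refine continuous_iff_continuousAt.2 fun l₀ => ?_
  obtain ⟨B, hB⟩ := exists_ae_norm_comp_sub_le hf hC (|l₀| + 1)
  have hnear : ∀ᶠ l in 𝓝 l₀, |l| ≤ |l₀| + 1 :=
    (continuous_abs.continuousAt.eventually_lt continuousAt_const (lt_add_one _)).mono
      fun _ h => h.le
  exact continuousAt_of_dominated
    (Eventually.of_forall fun _ => hf.comp_aestronglyMeasurable (hψ.sub aestronglyMeasurable_const))
    (hnear.mono hB) (integrable_const B)
    (Eventually.of_forall fun _ => (hf.comp (continuous_const.sub continuous_id)).continuousAt)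

variable {M : ℝ}

theorem strictAntiOn_integral_comp_sub [NeZero μ] (hf : Continuous f)
    (hmono : StrictMonoOn f (Ici 0)) (hψ : AEStronglyMeasurable ψ μ) (hC : ∀ᵐ x ∂μ, |ψ x| ≤ C)
    (hM : ∀ᵐ x ∂μ, M ≤ ψ x) : StrictAntiOn (fun l => ∫ x, f (ψ x - l) ∂μ) (Iic M) := by
  intro l₁ _ l₂ hl₂ hlt
  refine integral_lt_integral_of_ae_lt (integrable_comp_sub hf hψ hC l₂)
    (integrable_comp_sub hf hψ hC l₁) (hM.mono fun x hx => ?_)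
  have hl₂ : l₂ ≤ M := hl₂
  exact hmono (mem_Ici.2 (by linarith)) (mem_Ici.2 (by linarith)) (by linarith)

theorem measureReal_mul_le_integral_comp_sub (hmono : MonotoneOn f (Ici 0))
    {l : ℝ} (hint : Integrable (fun x => f (ψ x - l)) μ) (hM : ∀ᵐ x ∂μ, M ≤ ψ x) (hl : l ≤ M) :
    μ.real univ * f (M - l) ≤ ∫ x, f (ψ x - l) ∂μ := by
  have := integral_mono_ae (integrable_const (f (M - l))) hint <| hM.mono fun x hx =>
    hmono (mem_Ici.2 (sub_nonneg.2 hl)) (mem_Ici.2 (by linarith)) (by linarith)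
  rwa [integral_const, smul_eq_mul] at this

theorem tendsto_integral_comp_sub_atBot [NeZero μ] (hf : Continuous f)
    (hmono : MonotoneOn f (Ici 0)) (htop : Tendsto f atTop atTop)
    (hψ : AEStronglyMeasurable ψ μ) (hC : ∀ᵐ x ∂μ, |ψ x| ≤ C) (hM : ∀ᵐ x ∂μ, M ≤ ψ x) :
    Tendsto (fun l => ∫ x, f (ψ x - l) ∂μ) atBot atTop := by
  have hsub : Tendsto (fun l : ℝ => M - l) atBot atTop := by
    simpa [sub_eq_add_neg] using tendsto_atTop_add_const_left _ M tendsto_neg_atBot_atTop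
  refine tendsto_atTop_mono' _ ?_
    ((htop.comp hsub).const_mul_atTop (measureReal_univ_pos (μ := μ)))
  exact (eventually_le_atBot M).mono fun l hl =>
    measureReal_mul_le_integral_comp_sub hmono (integrable_comp_sub hf hψ hC l) hM hl

end

theorem existsUnique_lt_eq_of_strictAntiOn_Iic {F : ℝ → ℝ} {M m : ℝ} (hF : Continuous F)
    (hanti : StrictAntiOn F (Iic M)) (hbot : Tendsto F atBot atTop) (hM : F M < m) :
    ∃! l, l < M ∧ F l = m := by
  obtain ⟨l₀, hl₀m, hl₀M⟩ := ((hbot.eventually (eventually_ge_atTop m)).and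
    (eventually_le_atBot M)).exists
  obtain ⟨l, hl, hFl⟩ := intermediate_value_Icc' hl₀M hF.continuousOn ⟨hM.le, hl₀m⟩
  have hlM : l < M := hl.2.lt_of_ne (by rintro rfl; exact hM.ne hFl)
  exact ⟨l, ⟨hlM, hFl⟩, fun l' ⟨hl'M, hl'⟩ => hanti.injOn hl'M.le hlM.le (hl'.trans hFl.symm)⟩

/-- The algebraic core of Lemma 1.1 / Remark 1.1: unique Lagrange multiplier fixing the
total mass of the steady state density. -/
theorem steady_state_multiplier_exists_unique
    (Ω : Set (EuclideanSpace ℝ (Fin 3))) (hΩmeas : MeasurableSet Ω)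
    (hΩbdd : Bornology.IsBounded Ω) (hΩpos : 0 < volume Ω)
    (ψ : EuclideanSpace ℝ (Fin 3) → ℝ) (hψmeas : Measurable ψ)
    (hψbdd : ∃ C : ℝ, ∀ x ∈ Ω, |ψ x| ≤ C)
    (a γ m : ℝ) (ha : 0 < a) (hγ : 1 < γ)
    (hm : (∫ x in Ω, ((γ - 1) / (a * γ) *
        (ψ x - essInf ψ (volume.restrict Ω))) ^ (1 / (γ - 1))) < m) :
    ∃! l : ℝ, l < essInf ψ (volume.restrict Ω) ∧
      (∫ x in Ω, ((γ - 1) / (a * γ) * (ψ x - l)) ^ (1 / (γ - 1))) = m := by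
  obtain ⟨C, hC⟩ := hψbdd
  have : IsFiniteMeasure (volume.restrict Ω) :=
    isFiniteMeasure_restrict.2 hΩbdd.measure_lt_top.ne
  have : NeZero (volume.restrict Ω) := ⟨by simpa [Measure.restrict_eq_zero] using hΩpos.ne'⟩
  have hCae : ∀ᵐ x ∂volume.restrict Ω, |ψ x| ≤ C := ae_restrict_of_forall_mem hΩmeas hC
  have hM := ae_essInf_le ⟨-C, hCae.mono fun x hx => (abs_le.1 hx).1⟩
  have hc : 0 < (γ - 1) / (a * γ) := div_pos (by linarith) (by positivity)
  have hp : 0 < 1 / (γ - 1) := one_div_pos.2 (by linarith)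
  set f : ℝ → ℝ := fun t => ((γ - 1) / (a * γ) * t) ^ (1 / (γ - 1))
  have hf : Continuous f := (continuous_const.mul continuous_id).rpow_const fun _ => Or.inr hp.le
  have hmono : StrictMonoOn f (Ici 0) := fun s hs t _ hst =>
    Real.rpow_lt_rpow (mul_nonneg hc.le hs) (mul_lt_mul_of_pos_left hst hc) hp
  have htop : Tendsto f atTop atTop := (tendsto_rpow_atTop hp).comp (tendsto_id.const_mul_atTop hc)
  exact existsUnique_lt_eq_of_strictAntiOn_Iic
    (continuous_integral_comp_sub hf hψmeas.aestronglyMeasurable hCae)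
    (strictAntiOn_integral_comp_sub hf hmono hψmeas.aestronglyMeasurable hCae hM)
    (tendsto_integral_comp_sub_atBot hf hmono.monotoneOn htop hψmeas.aestronglyMeasurable hCae hM)
    hm
end

section
/- Let a > 0, γ > 1 and 0 < ρ̲ ≤ ρ̄. Then there exists a constant C̃₁ ∈ (0,1), depending only on a, γ, ρ̲ and ρ̄, such that for every ρ ≥ 0 and every s ∈ [ρ̲, ρ̄], C̃₁ · G(ρ,s) ≤ a (ρ^γ − s^γ)(ρ − s), where G(ρ,s) := (a/(γ−1)) · (ρ^γ + (γ−1) s^γ − γ s^{γ−1} ρ). -/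
/-!
`F = ρ^γ + (γ-1) s^γ - γ s^(γ-1) ρ` is the gap between `ρ^γ` and the tangent line of `t ↦ t^γ`
at `s`. Young's inequality with exponents `γ` and `γ/(γ-1)` gives `F ≥ 0`; applied with the roles of `ρ` and `s` exchanged it gives
`F ≤ γ (ρ^(γ-1) - s^(γ-1)) (ρ - s)`, and `s (ρ^(γ-1) - s^(γ-1)) (ρ - s)` differs from
`(ρ^γ - s^γ) (ρ - s)` by `ρ^(γ-1) (ρ - s)^2 ≥ 0`. Hence `s F ≤ γ (ρ^γ - s^γ) (ρ - s)`, and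
`s ≥ ρ̲` yields the claim with any constant `C ≤ (γ-1) ρ̲ / γ`.
-/

namespace Real

variable {γ x y : ℝ}

theorem rpow_sub_one_mul_self (hx : 0 ≤ x) (hγ : γ ≠ 0) : x ^ (γ - 1) * x = x ^ γ := by
  simpa using (rpow_add_one' hx (by simpa using hγ) : x ^ (γ - 1 + 1) = _).symm

theorem mul_rpow_sub_one_mul_le (hγ : 1 < γ) (hx : 0 ≤ x) (hy : 0 ≤ y) :
    γ * y ^ (γ - 1) * x ≤ x ^ γ + (γ - 1) * y ^ γ := by
  have hγ' : γ - 1 ≠ 0 := by linarith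
  have young := young_inequality_of_nonneg hx (rpow_nonneg hy (γ - 1))
    (HolderConjugate.conjExponent hγ)
  rw [conjExponent, ← rpow_mul hy, mul_div_cancel₀ _ hγ'] at young
  field_simp at young
  linarith

theorem mul_rpow_sub_one_sub_mul_sub_le (hγ : γ ≠ 0) (hx : 0 ≤ x) (hy : 0 ≤ y) :
    y * ((x ^ (γ - 1) - y ^ (γ - 1)) * (x - y)) ≤ (x ^ γ - y ^ γ) * (x - y) := by
  have hx' := rpow_sub_one_mul_self hx hγ
  have hy' := rpow_sub_one_mul_self hy hγ
  nlinarith [mul_nonneg (rpow_nonneg hx (γ - 1)) (sq_nonneg (x - y))]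

theorem mul_rpow_tangent_gap_le (hγ : 1 < γ) (hx : 0 ≤ x) (hy : 0 ≤ y) :
    y * (x ^ γ + (γ - 1) * y ^ γ - γ * y ^ (γ - 1) * x) ≤ γ * ((x ^ γ - y ^ γ) * (x - y)) := by
  have hγ0 : γ ≠ 0 := (zero_lt_one.trans hγ).ne'
  have gap_le : x ^ γ + (γ - 1) * y ^ γ - γ * y ^ (γ - 1) * x ≤
      γ * ((x ^ (γ - 1) - y ^ (γ - 1)) * (x - y)) := by
    have := mul_rpow_sub_one_mul_le hγ hy hx
    have hx' := rpow_sub_one_mul_self hx hγ0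
    have hy' := rpow_sub_one_mul_self hy hγ0
    nlinarith
  calc y * (x ^ γ + (γ - 1) * y ^ γ - γ * y ^ (γ - 1) * x)
      ≤ y * (γ * ((x ^ (γ - 1) - y ^ (γ - 1)) * (x - y))) := by gcongr
    _ = γ * (y * ((x ^ (γ - 1) - y ^ (γ - 1)) * (x - y))) := by ring
    _ ≤ γ * ((x ^ γ - y ^ γ) * (x - y)) :=
      mul_le_mul_of_nonneg_left (mul_rpow_sub_one_sub_mul_sub_le hγ0 hx hy) (by linarith)

end Real

theorem potential_energy_density_le_pressure_difference_general
    (a γ ρlo ρhi : ℝ) (ha : 0 < a) (hγ : 1 < γ) (hlo : 0 < ρlo) :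
    ∃ C : ℝ, 0 < C ∧ C < 1 ∧ ∀ ρ : ℝ, 0 ≤ ρ → ∀ s ∈ Set.Icc ρlo ρhi,
      C * (a / (γ - 1) * (ρ ^ γ + (γ - 1) * s ^ γ - γ * s ^ (γ - 1) * ρ)) ≤
        a * (ρ ^ γ - s ^ γ) * (ρ - s) := by
  have hγ1 : 0 < γ - 1 := by linarith
  refine ⟨min (1 / 2) ((γ - 1) * ρlo / γ), by positivity,
    (min_le_left _ _).trans_lt (by norm_num), fun ρ hρ s ⟨hlos, _⟩ => ?_⟩
  have hs : 0 ≤ s := hlo.le.trans hlos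
  set F := ρ ^ γ + (γ - 1) * s ^ γ - γ * s ^ (γ - 1) * ρ
  have hF : 0 ≤ F := by linarith [Real.mul_rpow_sub_one_mul_le hγ hρ hs]
  calc min (1 / 2) ((γ - 1) * ρlo / γ) * (a / (γ - 1) * F)
      ≤ (γ - 1) * ρlo / γ * (a / (γ - 1) * F) :=
        mul_le_mul_of_nonneg_right (min_le_right _ _) (by positivity)
    _ = a / γ * (ρlo * F) := by field_simp
    _ ≤ a / γ * (s * F) := by gcongr
    _ ≤ a / γ * (γ * ((ρ ^ γ - s ^ γ) * (ρ - s))) :=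
      mul_le_mul_of_nonneg_left (Real.mul_rpow_tangent_gap_le hγ hρ hs) (by positivity)
    _ = a * (ρ ^ γ - s ^ γ) * (ρ - s) := by field_simp

/-- The pointwise inequality C̃₁ G(ρ,s) ≤ a(ρ^γ − s^γ)(ρ − s) used for the exponential
decay in Section 5. -/
theorem potential_energy_density_le_pressure_difference
    (a γ ρlo ρhi : ℝ) (ha : 0 < a) (hγ : 1 < γ) (hlo : 0 < ρlo) (hlohi : ρlo ≤ ρhi) :
    ∃ C : ℝ, 0 < C ∧ C < 1 ∧ ∀ ρ : ℝ, 0 ≤ ρ → ∀ s ∈ Set.Icc ρlo ρhi,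
      C * (a / (γ - 1) * (ρ ^ γ + (γ - 1) * s ^ γ - γ * s ^ (γ - 1) * ρ)) ≤
        a * (ρ ^ γ - s ^ γ) * (ρ - s) :=
  potential_energy_density_le_pressure_difference_general a γ ρlo ρhi ha hγ hlo
end

section
/- Let U ⊆ ℝ³ be open, let a > 0 and γ > 1, and let ρ, ρ_s : U → ℝ be differentiable with ρ > 0 and ρ_s > 0 on U. Define G(ρ,ρ_s) := (a/(γ−1)) · (ρ^γ + (γ−1)ρ_s^γ − γ ρ_s^{γ−1} ρ). Then at every point of U, ρ_s^{−1} (∇(ρ^γ − ρ_s^γ) − γ(ρ − ρ_s) ρ_s^{γ−2} ∇ρ_s) = ∇(ρ_s^{−1}(ρ^γ − ρ_s^γ)) − ((γ−1)/a) · G(ρ,ρ_s) · ∇(ρ_s^{−1}). -/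
/-- `j`-th partial derivative of a scalar function on ℝ³. -/
noncomputable def pd (j : Fin 3) (f : (Fin 3 → ℝ) → ℝ) (x : Fin 3 → ℝ) : ℝ :=
  fderiv ℝ f x (Pi.single j 1)

/-!
Write `F = ρ^γ - ρₛ^γ`. By the product rule, `∇(ρₛ⁻¹ F) = ρₛ⁻¹ ∇F + F ∇(ρₛ⁻¹)` with
`∇(ρₛ⁻¹) = -ρₛ⁻² ∇ρₛ`, so the identity reduces to the pointwise fact that
`((γ - 1) / a) G(ρ, ρₛ) = ρ^γ - ρₛ^γ - γ ρₛ^(γ-1) (ρ - ρₛ)` is the gap between `t ↦ t^γ` and its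
tangent line at `ρₛ`: the tangent term `γ ρₛ^(γ-1) (ρ - ρₛ) · ρₛ⁻² ∇ρₛ` is exactly the
correction `γ (ρ - ρₛ) ρₛ^(γ-2) ∇ρₛ` of the left-hand side, divided by `ρₛ`.
-/

open Real

section PartialDerivative

variable {f g : (Fin 3 → ℝ) → ℝ} {x : Fin 3 → ℝ}

theorem pd_mul (hf : DifferentiableAt ℝ f x) (hg : DifferentiableAt ℝ g x) (j : Fin 3) :
    pd j (fun y => f y * g y) x = f x * pd j g x + g x * pd j f x := by
  simp [pd, fderiv_fun_mul hf hg]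

theorem pd_inv (hf : DifferentiableAt ℝ f x) (hx : f x ≠ 0) (j : Fin 3) :
    pd j (fun y => (f y)⁻¹) x = -(f x ^ 2)⁻¹ * pd j f x := by
  have h : HasFDerivAt (fun y => (f y)⁻¹) ((-(f x ^ 2)⁻¹) • fderiv ℝ f x) x :=
    (hasDerivAt_inv hx).comp_hasFDerivAt x hf.hasFDerivAt
  simp [pd, h.fderiv]

end PartialDerivative

theorem rpow_sub_rpow_sub_tangent_eq {a γ s : ℝ} (ha : a ≠ 0) (hγ : γ ≠ 1) (hs : s ≠ 0) (r : ℝ) :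
    r ^ γ - s ^ γ - γ * s ^ (γ - 1) * (r - s)
      = (γ - 1) / a * (a / (γ - 1) * (r ^ γ + (γ - 1) * s ^ γ - γ * s ^ (γ - 1) * r)) := by
  have hγ1 : γ - 1 ≠ 0 := sub_ne_zero.mpr hγ
  rw [rpow_sub_one hs]
  field_simp
  ring

theorem large_force_gradient_identity_general
    (U : Set (Fin 3 → ℝ))
    (a γ : ℝ) (ha : 0 < a) (hγ : 1 < γ)
    (ρ ρs : (Fin 3 → ℝ) → ℝ)
    (hρ : ∀ x ∈ U, DifferentiableAt ℝ ρ x) (hρs : ∀ x ∈ U, DifferentiableAt ℝ ρs x)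
    (hρspos : ∀ x ∈ U, 0 < ρs x)
    (G : ℝ → ℝ → ℝ)
    (hG : G = fun r s => a / (γ - 1) * (r ^ γ + (γ - 1) * s ^ γ - γ * s ^ (γ - 1) * r)) :
    ∀ x ∈ U,
      (ρs x)⁻¹ • ((fun j => pd j (fun y => ρ y ^ γ - ρs y ^ γ) x)
            - (γ * (ρ x - ρs x) * ρs x ^ (γ - 2)) • (fun j => pd j ρs x))
        = (fun j => pd j (fun y => (ρs y)⁻¹ * (ρ y ^ γ - ρs y ^ γ)) x)
            - ((γ - 1) / a * G (ρ x) (ρs x)) • (fun j => pd j (fun y => (ρs y)⁻¹) x) := by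
  intro x hx
  have hs : ρs x ≠ 0 := (hρspos x hx).ne'
  have hF : DifferentiableAt ℝ (fun y => ρ y ^ γ - ρs y ^ γ) x :=
    ((hρ x hx).rpow_const (Or.inr hγ.le)).sub ((hρs x hx).rpow_const (Or.inr hγ.le))
  funext j
  simp only [Pi.smul_apply, Pi.sub_apply, smul_eq_mul, hG]
  rw [pd_mul (f := fun y => (ρs y)⁻¹) ((hρs x hx).inv hs) hF, pd_inv (hρs x hx) hs,
    ← rpow_sub_rpow_sub_tangent_eq ha.ne' hγ.ne' hs, show γ - 1 = γ - 2 + 1 by ring,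
    rpow_add_one hs]
  field_simp
  ring

/-- The identity (1.27) of the paper, the key algebraic tool for handling large
potential forces. -/
theorem large_force_gradient_identity
    (U : Set (Fin 3 → ℝ)) (hU : IsOpen U)
    (a γ : ℝ) (ha : 0 < a) (hγ : 1 < γ)
    (ρ ρs : (Fin 3 → ℝ) → ℝ)
    (hρ : ∀ x ∈ U, DifferentiableAt ℝ ρ x) (hρs : ∀ x ∈ U, DifferentiableAt ℝ ρs x)
    (hρpos : ∀ x ∈ U, 0 < ρ x) (hρspos : ∀ x ∈ U, 0 < ρs x)
    (G : ℝ → ℝ → ℝ)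
    (hG : G = fun r s => a / (γ - 1) * (r ^ γ + (γ - 1) * s ^ γ - γ * s ^ (γ - 1) * r)) :
    ∀ x ∈ U,
      (ρs x)⁻¹ • ((fun j => pd j (fun y => ρ y ^ γ - ρs y ^ γ) x)
            - (γ * (ρ x - ρs x) * ρs x ^ (γ - 2)) • (fun j => pd j ρs x))
        = (fun j => pd j (fun y => (ρs y)⁻¹ * (ρ y ^ γ - ρs y ^ γ)) x)
            - ((γ - 1) / a * G (ρ x) (ρs x)) • (fun j => pd j (fun y => (ρs y)⁻¹) x) :=
  large_force_gradient_identity_general U a γ ha hγ ρ ρs hρ hρs hρspos G hG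
end
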